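/- arXiv:1112.2104 — 3 statements merged into one kernel-verified Lean document; each statement's English description precedes it below -/
import Mathlib

section
/- Let G be a group, H ⊴ G a normal subgroup, ρ : H → GL(V) a representation, and let u, u' : G → H both satisfy the condition u(gh) = u(g)h and u'(gh) = u'(g)h for all g ∈ G, h ∈ H. Define ψ(g) := ρ(u'(g)·u(g)⁻¹). Then ψ(g) depends only on the coset gH (i.e. ψ(gh) = ψ(g) for all h ∈ H), and ψ intertwines the two cocycles: ψ(g₁g) ∘ ρ(u(g₁g)u(g)⁻¹) = ρ(u'(g₁g)u'(g)⁻¹) ∘ ψ(g) for all g, g₁ ∈ G. -/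
/-- For two right `H`-equivariant maps `u, u' : G → H`, the map `ψ(g) = ρ(u'(g)u(g)⁻¹)`
depends only on the coset `gH` and intertwines the two canonical-model cocycles. -/
theorem stmt4 {G : Type*} [Group G] (H : Subgroup G) (hN : H.Normal)
    {V : Type*} [AddCommGroup V] [Module ℂ V]
    (ρ : Representation ℂ H V)
    (u u' : G → H)
    (hu : ∀ (g : G) (h : H), u (g * ↑h) = u g * h)
    (hu' : ∀ (g : G) (h : H), u' (g * ↑h) = u' g * h) :
    (∀ (g : G) (h : H),
      (ρ (u' (g * ↑h) * (u (g * ↑h))⁻¹) : V →ₗ[ℂ] V) = ρ (u' g * (u g)⁻¹)) ∧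
    (∀ g g₁ : G,
      (ρ (u' (g₁ * g) * (u (g₁ * g))⁻¹) : V →ₗ[ℂ] V)
          ∘ₗ (ρ (u (g₁ * g) * (u g)⁻¹) : V →ₗ[ℂ] V)
        = (ρ (u' (g₁ * g) * (u' g)⁻¹) : V →ₗ[ℂ] V)
            ∘ₗ (ρ (u' g * (u g)⁻¹) : V →ₗ[ℂ] V)) := by
  constructor
  · intro g h
    rw [hu, hu']
    congr 1
    group
  · intro g g₁
    rw [← Module.End.mul_eq_comp, ← Module.End.mul_eq_comp, ← map_mul, ← map_mul]
    congr 1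
    group
end

section
/- Let G be a group, H ⊴ G finite normal, ρ : H → GL(V) irreducible with intertwiner C(g) ∈ GL(V) satisfying ρ(g⁻¹hg) = C(g)ρ(h)C(g)⁻¹ for all h ∈ H, and u : G → H right H-equivariant with u(1)=1. Fix a ∈ G and B ∈ GL(F), and define A[g] := B ⊗ ( ρ(u(ga)u(a)⁻¹) ∘ C(g'(a)) ∘ ρ(u(g)⁻¹) ), where g'(a) := u(a)⁻¹·a. Then the family (A[g]) satisfies the equivariance relation (id ⊗ ρ(u(g₁ga)u(ga)⁻¹)) ∘ A[g] = A[g₁g] ∘ (id ⊗ ρ(u(g₁g)u(g)⁻¹)) for all g, g₁ ∈ G. -/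
/-- Every base translation `a` lifts to an equivariant automorphism of the canonical model:
the family `A[g] = B ⊗ (ρ(u(ga)u(a)⁻¹) ∘ C(g'(a)) ∘ ρ(u(g)⁻¹))`, with `g'(a) = u(a)⁻¹a`,
satisfies the equivariance relation
`(id ⊗ ρ(u(g₁ga)u(ga)⁻¹)) ∘ A[g] = A[g₁g] ∘ (id ⊗ ρ(u(g₁g)u(g)⁻¹))`. -/
theorem stmt10 {G : Type*} [Group G] (H : Subgroup G) (hN : H.Normal) (hfin : Finite H)
    {V F : Type*} [AddCommGroup V] [Module ℂ V] [AddCommGroup F] [Module ℂ F]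
    [FiniteDimensional ℂ V] [FiniteDimensional ℂ F]
    (ρ : Representation ℂ H V)
    (u : G → H) (hu : ∀ (g : G) (h : H), u (g * ↑h) = u g * h) (hone : u 1 = 1)
    (C : G → (V ≃ₗ[ℂ] V))
    (hC : ∀ (g : G) (h : H),
      (ρ ⟨g⁻¹ * ↑h * g, by simpa using hN.conj_mem ↑h h.2 g⁻¹⟩ : V →ₗ[ℂ] V)
        = (C g).toLinearMap ∘ₗ (ρ h : V →ₗ[ℂ] V) ∘ₗ (C g).symm.toLinearMap)
    (a : G) (B : F →ₗ[ℂ] F) :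
    ∀ g₁ g : G,
      LinearMap.lTensor F (ρ (u (g₁ * g * a) * (u (g * a))⁻¹)) ∘ₗ
          TensorProduct.map B
            ((ρ (u (g * a) * (u a)⁻¹) : V →ₗ[ℂ] V)
              ∘ₗ (C ((↑(u a) : G)⁻¹ * a)).toLinearMap ∘ₗ (ρ ((u g)⁻¹) : V →ₗ[ℂ] V))
        = TensorProduct.map B
            ((ρ (u (g₁ * g * a) * (u a)⁻¹) : V →ₗ[ℂ] V)
              ∘ₗ (C ((↑(u a) : G)⁻¹ * a)).toLinearMap ∘ₗ (ρ ((u (g₁ * g))⁻¹) : V →ₗ[ℂ] V))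
            ∘ₗ LinearMap.lTensor F (ρ (u (g₁ * g) * (u g)⁻¹)) := by
  intro g₁ g
  have h1 : (ρ (u (g₁*g*a) * (u (g*a))⁻¹) : V →ₗ[ℂ] V) ∘ₗ (ρ (u (g*a) * (u a)⁻¹) : V →ₗ[ℂ] V)
      = (ρ (u (g₁*g*a) * (u a)⁻¹) : V →ₗ[ℂ] V) := by
    rw [← Module.End.mul_eq_comp, ← map_mul]
    congr 1
    group
  have h2 : (ρ ((u (g₁*g))⁻¹) : V →ₗ[ℂ] V) ∘ₗ (ρ (u (g₁*g) * (u g)⁻¹) : V →ₗ[ℂ] V)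
      = (ρ ((u g)⁻¹) : V →ₗ[ℂ] V) := by
    rw [← Module.End.mul_eq_comp, ← map_mul]
    congr 1
    group
  rw [LinearMap.lTensor, LinearMap.lTensor, ← TensorProduct.map_comp, ← TensorProduct.map_comp]
  rw [LinearMap.id_comp, LinearMap.comp_id]
  congr 1
  calc (ρ (u (g₁*g*a) * (u (g*a))⁻¹) : V →ₗ[ℂ] V) ∘ₗ
        ((ρ (u (g*a) * (u a)⁻¹) : V →ₗ[ℂ] V) ∘ₗ (C ((↑(u a) : G)⁻¹ * a)).toLinearMap ∘ₗ (ρ ((u g)⁻¹) : V →ₗ[ℂ] V))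
      = ((ρ (u (g₁*g*a) * (u (g*a))⁻¹) : V →ₗ[ℂ] V) ∘ₗ (ρ (u (g*a) * (u a)⁻¹) : V →ₗ[ℂ] V)) ∘ₗ
        (C ((↑(u a) : G)⁻¹ * a)).toLinearMap ∘ₗ (ρ ((u g)⁻¹) : V →ₗ[ℂ] V) := by
        simp [LinearMap.comp_assoc]
    _ = (ρ (u (g₁*g*a) * (u a)⁻¹) : V →ₗ[ℂ] V) ∘ₗ (C ((↑(u a) : G)⁻¹ * a)).toLinearMap ∘ₗ (ρ ((u g)⁻¹) : V →ₗ[ℂ] V) := by rw [h1]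
    _ = _ := by rw [← h2]; simp [LinearMap.comp_assoc]
end

section
/- Let G be a group acting on a set M, and H ≤ G a subgroup such that M = ⋃_{g∈G} M^{gHg⁻¹} and H is maximal among isotropy-related subgroups in the sense that for all g ∈ G, either M^{gHg⁻¹} = M^H or M^{gHg⁻¹} ∩ M^H = ∅, with M^{gHg⁻¹} = M^H if and only if g ∈ N(H). Then M is the disjoint union over cosets [g] ∈ G/N(H) of the sets g·M^H, and each g·M^H = M^{gHg⁻¹}. -/
/-!
Translation by `g` carries `M^H` onto `M^{gHg⁻¹}`. Hence `g₁ • M^H` and `g₂ • M^H` are the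
`g₁`-translates of `M^H` and `(g₁⁻¹g₂) • M^H = M^{(g₁⁻¹g₂)H(g₁⁻¹g₂)⁻¹}`, which the maximality
hypothesis says are equal or disjoint according as `g₁⁻¹g₂` normalizes `H` or not.
-/

/-- The fixed-point set of a subgroup `K` acting on `M`. -/
def fixedSet {G : Type*} (M : Type*) [Group G] [MulAction G M] (K : Subgroup G) : Set M :=
  {x : M | ∀ k ∈ K, k • x = x}

/-- The conjugate subgroup `gHg⁻¹`. -/
def conjSub {G : Type*} [Group G] (g : G) (H : Subgroup G) : Subgroup G :=
  Subgroup.map (MulAut.conj g).toMonoidHom H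

open scoped Pointwise

section SetTranslates

variable {G M : Type*} [Group G] [MulAction G M] {g₁ g₂ : G} {s : Set M}

theorem smul_set_eq_smul_set_of_inv_mul_smul_eq (h : (g₁⁻¹ * g₂) • s = s) :
    g₁ • s = g₂ • s := by
  rw [← mul_inv_cancel_left g₁ g₂, ← smul_smul, h]

theorem smul_set_inter_smul_set_eq_empty_of_inv_mul (h : (g₁⁻¹ * g₂) • s ∩ s = ∅) :
    g₁ • s ∩ g₂ • s = ∅ := by
  rw [← mul_inv_cancel_left g₁ g₂, ← smul_smul, ← Set.smul_set_inter, Set.inter_comm, h,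
    Set.smul_set_empty]

end SetTranslates

theorem smul_fixedSet {G M : Type*} [Group G] [MulAction G M] (g : G) (H : Subgroup G) :
    g • fixedSet M H = fixedSet M (conjSub g H) := by
  ext x
  simp only [Set.mem_smul_set_iff_inv_smul_mem, fixedSet, conjSub, Set.mem_ofPred_eq,
    Subgroup.mem_map, forall_exists_index, and_imp, forall_apply_eq_imp_iff₂,
    MulEquiv.coe_toMonoidHom, MulAut.conj_apply, mul_smul]
  refine forall₂_congr fun h _ => ?_
  rw [← smul_left_cancel_iff g, smul_inv_smul]

/-- Conner–Floyd decomposition: if `M` is covered by the fixed sets of the conjugates of a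
maximal subgroup `H`, then `M` is the disjoint union, indexed by the cosets of the
normalizer `N(H)`, of the translates `g·M^H = M^{gHg⁻¹}`. -/
theorem stmt11 {G M : Type*} [Group G] [MulAction G M] (H : Subgroup G)
    (hcover : ∀ x : M, ∃ g : G, x ∈ fixedSet M (conjSub g H))
    (hmax : ∀ g : G, fixedSet M (conjSub g H) = fixedSet M H ∨
      fixedSet M (conjSub g H) ∩ fixedSet M H = ∅)
    (hnorm : ∀ g : G, fixedSet M (conjSub g H) = fixedSet M H ↔ g ∈ Subgroup.normalizer (H : Set G)) :
    (∀ g : G, (fun x => g • x) '' fixedSet M H = fixedSet M (conjSub g H)) ∧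
    (∀ g₁ g₂ : G, g₁⁻¹ * g₂ ∈ Subgroup.normalizer (H : Set G) →
      (fun x => g₁ • x) '' fixedSet M H = (fun x => g₂ • x) '' fixedSet M H) ∧
    (∀ g₁ g₂ : G, g₁⁻¹ * g₂ ∉ Subgroup.normalizer (H : Set G) →
      ((fun x => g₁ • x) '' fixedSet M H) ∩ ((fun x => g₂ • x) '' fixedSet M H) = ∅) ∧
    (∀ x : M, ∃ g : G, x ∈ (fun x => g • x) '' fixedSet M H) := by
  simp only [Set.image_smul]
  refine ⟨fun g => smul_fixedSet g H, fun g₁ g₂ hn => ?_, fun g₁ g₂ hn => ?_, fun x => ?_⟩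
  · apply smul_set_eq_smul_set_of_inv_mul_smul_eq
    rw [smul_fixedSet, (hnorm _).2 hn]
  · apply smul_set_inter_smul_set_eq_empty_of_inv_mul
    rw [smul_fixedSet]
    exact (hmax _).resolve_left (mt (hnorm _).1 hn)
  · obtain ⟨g, hg⟩ := hcover x
    exact ⟨g, by rwa [smul_fixedSet]⟩
end
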